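/- arXiv:dg-ga/9710007 — 2 statements merged into one kernel-verified Lean document; each statement's English description precedes it below -/
import Mathlib

section
/- Let g be a Lie algebra and N : g → g a linear map with vanishing Nijenhuis torsion. Then the deformed bracket [·,·]_N and the original bracket [·,·] are compatible in the sense that for every t ∈ ℝ, the linear combination [X,Y] + t[X,Y]_N = [X,Y]_{id + tN} (the deformation by id + tN) satisfies the Jacobi identity. -/
/-- Deformation of the bracket by a linear map `M`:
`[X,Y]_M = [MX,Y] + [X,MY] - M[X,Y]`. -/
def deformedBracket {g : Type*} [LieRing g] [LieAlgebra ℝ g]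
    (M : g →ₗ[ℝ] g) (X Y : g) : g :=
  ⁅M X, Y⁆ + ⁅X, M Y⁆ - M ⁅X, Y⁆

/-- Left-nested Jacobi identity. -/
lemma jacL {g : Type*} [LieRing g] (a b c : g) :
    ⁅⁅a, b⁆, c⁆ + ⁅⁅b, c⁆, a⁆ + ⁅⁅c, a⁆, b⁆ = 0 := by
  have h := lie_jacobi (x := a) (y := b) (z := c)
  have e1 : ⁅⁅a, b⁆, c⁆ = -⁅c, ⁅a, b⁆⁆ := (lie_skew _ _).symm
  have e2 : ⁅⁅b, c⁆, a⁆ = -⁅a, ⁅b, c⁆⁆ := (lie_skew _ _).symm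
  have e3 : ⁅⁅c, a⁆, b⁆ = -⁅b, ⁅c, a⁆⁆ := (lie_skew _ _).symm
  rw [e1, e2, e3]
  linear_combination (norm := abel) -h

/-- Additivity of the deformed bracket in the first slot. -/
lemma deformedBracket_add_left {g : Type*} [LieRing g] [LieAlgebra ℝ g]
    (N : g →ₗ[ℝ] g) (a b Z : g) :
    deformedBracket N (a + b) Z = deformedBracket N a Z + deformedBracket N b Z := by
  simp only [deformedBracket, map_add, add_lie]
  abel

lemma deformedBracket_smul_left {g : Type*} [LieRing g] [LieAlgebra ℝ g]
    (N : g →ₗ[ℝ] g) (s : ℝ) (a Z : g) :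
    deformedBracket N (s • a) Z = s • deformedBracket N a Z := by
  simp only [deformedBracket, map_smul, smul_lie, smul_add, smul_sub]

/-- First-order compatibility: mixed Jacobiator of `[·,·]` and `[·,·]_N` vanishes
(for any linear `N`). -/
lemma mixed_jacobi {g : Type*} [LieRing g] [LieAlgebra ℝ g]
    (N : g →ₗ[ℝ] g) (X Y Z : g) :
    ⁅deformedBracket N X Y, Z⁆ + deformedBracket N ⁅X, Y⁆ Z
      + (⁅deformedBracket N Y Z, X⁆ + deformedBracket N ⁅Y, Z⁆ X)
      + (⁅deformedBracket N Z X, Y⁆ + deformedBracket N ⁅Z, X⁆ Y) = 0 := by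
  have j1 := jacL (N X) Y Z
  have j2 := jacL X (N Y) Z
  have j3 := jacL X Y (N Z)
  have s : ⁅⁅X, Y⁆, Z⁆ + ⁅⁅Y, Z⁆, X⁆ + ⁅⁅Z, X⁆, Y⁆ = 0 := jacL X Y Z
  have m1 : N ⁅⁅X, Y⁆, Z⁆ + N ⁅⁅Y, Z⁆, X⁆ + N ⁅⁅Z, X⁆, Y⁆ = 0 := by
    have := congrArg N s
    simpa only [map_add, map_zero] using this
  simp only [deformedBracket, add_lie, sub_lie]
  linear_combination (norm := abel) j1 + j2 + j3 - m1

/-- Second-order compatibility: the Jacobiator of `[·,·]_N` vanishes when the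
Nijenhuis torsion of `N` vanishes. -/
lemma deformed_jacobi {g : Type*} [LieRing g] [LieAlgebra ℝ g]
    (N : g →ₗ[ℝ] g)
    (htor : ∀ X Y : g, N (deformedBracket N X Y) = ⁅N X, N Y⁆)
    (X Y Z : g) :
    deformedBracket N (deformedBracket N X Y) Z
      + deformedBracket N (deformedBracket N Y Z) X
      + deformedBracket N (deformedBracket N Z X) Y = 0 := by
  have hb : ∀ U V : g, ⁅N U, N V⁆ = N ⁅N U, V⁆ + N ⁅U, N V⁆ - N (N ⁅U, V⁆) := by
    intro U V
    rw [← htor]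
    simp only [deformedBracket, map_add, map_sub]
  -- double-N Jacobiators
  have j1 := jacL (N X) (N Y) Z
  have j2 := jacL (N Y) (N Z) X
  have j3 := jacL (N Z) (N X) Y
  -- N applied to the single-N Jacobiators
  have s1 : ⁅⁅N X, Y⁆, Z⁆ + ⁅⁅Y, Z⁆, N X⁆ + ⁅⁅Z, N X⁆, Y⁆
      + (⁅⁅X, N Y⁆, Z⁆ + ⁅⁅N Y, Z⁆, X⁆ + ⁅⁅Z, X⁆, N Y⁆)
      + (⁅⁅X, Y⁆, N Z⁆ + ⁅⁅Y, N Z⁆, X⁆ + ⁅⁅N Z, X⁆, Y⁆) = 0 := by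
    linear_combination (norm := abel) jacL (N X) Y Z + jacL X (N Y) Z + jacL X Y (N Z)
  have m1 : N ⁅⁅N X, Y⁆, Z⁆ + N ⁅⁅Y, Z⁆, N X⁆ + N ⁅⁅Z, N X⁆, Y⁆
      + (N ⁅⁅X, N Y⁆, Z⁆ + N ⁅⁅N Y, Z⁆, X⁆ + N ⁅⁅Z, X⁆, N Y⁆)
      + (N ⁅⁅X, Y⁆, N Z⁆ + N ⁅⁅Y, N Z⁆, X⁆ + N ⁅⁅N Z, X⁆, Y⁆) = 0 := by
    have := congrArg N s1
    simpa only [map_add, map_zero] using this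
  -- N² applied to the plain Jacobiator
  have m2 : N (N ⁅⁅X, Y⁆, Z⁆) + N (N ⁅⁅Y, Z⁆, X⁆) + N (N ⁅⁅Z, X⁆, Y⁆) = 0 := by
    have := congrArg (fun v => N (N v)) (jacL X Y Z)
    simpa only [map_add, map_zero] using this
  show ⁅N (deformedBracket N X Y), Z⁆ + ⁅deformedBracket N X Y, N Z⁆
        - N ⁅deformedBracket N X Y, Z⁆
      + (⁅N (deformedBracket N Y Z), X⁆ + ⁅deformedBracket N Y Z, N X⁆
        - N ⁅deformedBracket N Y Z, X⁆)
      + (⁅N (deformedBracket N Z X), Y⁆ + ⁅deformedBracket N Z X, N Y⁆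
        - N ⁅deformedBracket N Z X, Y⁆) = 0
  rw [htor X Y, htor Y Z, htor Z X]
  simp only [deformedBracket, add_lie, sub_lie, lie_add, lie_sub, map_add, map_sub]
  rw [hb ⁅X, Y⁆ Z, hb ⁅Y, Z⁆ X, hb ⁅Z, X⁆ Y]
  linear_combination (norm := abel) j1 + j2 + j3 - m1 + m2

/-- If `N` has vanishing Nijenhuis torsion, the brackets `[·,·]` and `[·,·]_N`
are compatible: for every `t ∈ ℝ`, the combination
`[X,Y] + t [X,Y]_N = [X,Y]_{id + tN}` satisfies the Jacobi identity. -/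
theorem compatible_pencil_jacobi {g : Type*} [LieRing g] [LieAlgebra ℝ g]
    (N : g →ₗ[ℝ] g)
    (htor : ∀ X Y : g, N (deformedBracket N X Y) = ⁅N X, N Y⁆) :
    ∀ t : ℝ, ∀ X Y Z : g,
      (let B : g → g → g := fun X Y => ⁅X, Y⁆ + t • deformedBracket N X Y
       B (B X Y) Z + B (B Y Z) X + B (B Z X) Y) = 0 := by
  intro t X Y Z
  simp only
  simp only [add_lie, smul_lie, deformedBracket_add_left, deformedBracket_smul_left,
    smul_add]
  linear_combination (norm := module) jacL X Y Z + t • mixed_jacobi N X Y Z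
    + (t * t) • deformed_jacobi N htor X Y Z
end

section
/- Let g be a Lie algebra, N : g → g linear with vanishing Nijenhuis torsion. Then for every k ≥ 1, Nᵏ also has vanishing Nijenhuis torsion (in particular N² is a Nijenhuis tensor). -/
/-- Nijenhuis torsion of `M`: `T_M(X,Y) = M [X,Y]_M - [MX,MY]`. -/
def nijenhuisTorsion {g : Type*} [LieRing g] [LieAlgebra ℝ g]
    (M : g →ₗ[ℝ] g) (X Y : g) : g :=
  M (deformedBracket M X Y) - ⁅M X, M Y⁆

section Aux

variable {g : Type*} [LieRing g] [LieAlgebra ℝ g] (N : g →ₗ[ℝ] g)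

lemma nij_star (htor : ∀ X Y : g, nijenhuisTorsion N X Y = 0) (X Y : g) :
    ⁅N X, N Y⁆ = N ⁅N X, Y⁆ + N ⁅X, N Y⁆ - N (N ⁅X, Y⁆) := by
  have h := htor X Y
  simp only [nijenhuisTorsion, deformedBracket, map_add, map_sub, sub_eq_zero] at h
  exact h.symm

lemma nij_P (htor : ∀ X Y : g, nijenhuisTorsion N X Y = 0) :
    ∀ m : ℕ, 1 ≤ m → ∀ X Y : g,
      ⁅(N ^ m) X, N Y⁆ =
        N ⁅(N ^ m) X, Y⁆ + (N ^ m) ⁅X, N Y⁆ - (N ^ (m + 1)) ⁅X, Y⁆ := by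
  intro m hm
  induction m with
  | zero => omega
  | succ m ih =>
    rcases Nat.eq_or_lt_of_le hm with h1 | h1
    · intro X Y
      have : m = 0 := by omega
      subst this
      simpa [pow_one, pow_two, Module.End.mul_apply] using nij_star N htor X Y
    · have hm1 : 1 ≤ m := by omega
      intro X Y
      have hNm : (N ^ (m + 1)) X = N ((N ^ m) X) := by
        simp [pow_succ', Module.End.mul_apply]
      rw [hNm]
      rw [nij_star N htor ((N ^ m) X) Y]
      rw [ih hm1 X Y]
      have hr : ∀ Z : g, (N ^ (m + 1)) Z = N ((N ^ m) Z) := by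
        intro Z; simp [pow_succ', Module.End.mul_apply]
      have hr2 : ∀ Z : g, (N ^ (m + 2)) Z = N ((N ^ (m + 1)) Z) := by
        intro Z; simp [pow_succ', Module.End.mul_apply]
      simp only [map_add, map_sub, hr, hr2, hNm]
      abel

lemma nij_G (htor : ∀ X Y : g, nijenhuisTorsion N X Y = 0) :
    ∀ n : ℕ, 1 ≤ n → ∀ m : ℕ, 1 ≤ m → ∀ X Y : g,
      ⁅(N ^ m) X, (N ^ n) Y⁆ =
        (N ^ n) ⁅(N ^ m) X, Y⁆ + (N ^ m) ⁅X, (N ^ n) Y⁆ - (N ^ (m + n)) ⁅X, Y⁆ := by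
  intro n hn
  induction n with
  | zero => omega
  | succ n ih =>
    rcases Nat.eq_or_lt_of_le hn with h1 | h1
    · intro m hm X Y
      have : n = 0 := by omega
      subst this
      simpa [pow_one] using nij_P N htor m hm X Y
    · have hn1 : 1 ≤ n := by omega
      intro m hm X Y
      have hNn : (N ^ (n + 1)) Y = N ((N ^ n) Y) := by
        simp [pow_succ', Module.End.mul_apply]
      rw [hNn]
      rw [nij_P N htor m hm X ((N ^ n) Y)]
      rw [ih hn1 m hm X Y]
      have hr : ∀ Z : g, (N ^ (n + 1)) Z = N ((N ^ n) Z) := by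
        intro Z; simp [pow_succ', Module.End.mul_apply]
      have hr2 : ∀ Z : g, (N ^ (m + (n + 1))) Z = N ((N ^ (m + n)) Z) := by
        intro Z
        have : m + (n + 1) = (m + n) + 1 := by omega
        rw [this]; simp [pow_succ', Module.End.mul_apply]
      have hr3 : ∀ Z : g, (N ^ (m + 1)) Z = N ((N ^ m) Z) := by
        intro Z; simp [pow_succ', Module.End.mul_apply]
      simp only [map_add, map_sub, hr, hr2, hr3, hNn]
      abel

end Aux

/-- If `N` has vanishing Nijenhuis torsion, then so does every power `Nᵏ`,
`k ≥ 1` (in particular `N²` is a Nijenhuis tensor). -/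
theorem nijenhuisTorsion_pow {g : Type*} [LieRing g] [LieAlgebra ℝ g]
    (N : g →ₗ[ℝ] g)
    (htor : ∀ X Y : g, nijenhuisTorsion N X Y = 0) :
    ∀ k : ℕ, 1 ≤ k → ∀ X Y : g, nijenhuisTorsion (N ^ k) X Y = 0 := by
  intro k hk X Y
  have h := nij_G N htor k hk k hk X Y
  have hkk : ∀ Z : g, (N ^ (k + k)) Z = (N ^ k) ((N ^ k) Z) := by
    intro Z
    rw [pow_add, Module.End.mul_apply]
  simp only [nijenhuisTorsion, deformedBracket, map_add, map_sub, sub_eq_zero]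
  rw [h, hkk]
end
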